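/- arXiv:2205.02749 — 6 statements merged into one kernel-verified Lean document; each statement's English description precedes it below -/
import Mathlib

section
/- Soundness of the (◻ₛ) rule: let Γ ⊢ Δ{◻ₛφ} be a nested sequent whose indicated component contains ◻ₛφ, and let Γ ⊢ Δ{◻ₛφ}, (s)[φ] be the sequent obtained by appending the new nesting (s)[φ] to the consequent. If the premise Γ ⊢ Δ{◻ₛφ}, (s)[φ] is valid, then the conclusion Γ ⊢ Δ{◻ₛφ} is valid. -/
/-- Formulas of propositional standpoint logic in negation normal form,
over propositional variables `P` and standpoint symbols `S`. -/
inductive Fml (P S : Type) : Type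
  | atom  : P → Fml P S
  | natom : P → Fml P S
  | or    : Fml P S → Fml P S → Fml P S
  | and   : Fml P S → Fml P S → Fml P S
  | box   : S → Fml P S → Fml P S
  | dia   : S → Fml P S → Fml P S

/-- A standpoint model over the vocabulary `(P, S)` with distinguished
universal standpoint `star`, whose set of precisifications is `W`. -/
structure Model (P S : Type) (star : S) (W : Type) : Type where
  nonempty : Nonempty W
  sig : S → Set W
  val : P → Set W
  sig_nonempty : ∀ s, (sig s).Nonempty
  sig_star : sig star = Set.univ

/-- Satisfaction of a formula at a precisification of a standpoint model. -/
def sat {P S W : Type} {star : S} (M : Model P S star W) : W → Fml P S → Prop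
  | w, .atom p  => w ∈ M.val p
  | w, .natom p => w ∉ M.val p
  | w, .or φ ψ  => sat M w φ ∨ sat M w ψ
  | w, .and φ ψ => sat M w φ ∧ sat M w ψ
  | _, .box s φ => ∀ v ∈ M.sig s, sat M v φ
  | _, .dia s φ => ∃ v ∈ M.sig s, sat M v φ

/-- `M` satisfies every sharpening statement `s ≼ s'` in `Γ`
(this does not depend on the precisification). -/
def satSharp {P S W : Type} {star : S} (M : Model P S star W) (Γ : Set (S × S)) : Prop :=
  ∀ q ∈ Γ, M.sig q.1 ⊆ M.sig q.2

/-- `SpRel star Γ s s'` is `s ≼*_Γ s'`: the least reflexive-transitive relation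
containing all pairs of `Γ` and relating every standpoint to `star`. -/
inductive SpRel {S : Type} (star : S) (Γ : Set (S × S)) : S → S → Prop
  | base {s s'} : (s, s') ∈ Γ → SpRel star Γ s s'
  | toStar (s) : SpRel star Γ s star
  | refl (s) : SpRel star Γ s s
  | trans {s t u} : SpRel star Γ s t → SpRel star Γ t u → SpRel star Γ s u

/-- Satisfaction at `w` of the formula interpretation
`ι(Γ ⊢ Σ₀, (s₁)[Σ₁], …, (sₙ)[Σₙ]) = ⋀Γ → ⋁Σ₀ ∨ ⋁ᵢ ◻_{sᵢ}(⋁Σᵢ)`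
of the nested sequent with antecedent `Γ`, root component `root = Σ₀`
and nestings `nest = [(s₁, Σ₁), …, (sₙ, Σₙ)]`. -/
def satSeq {P S W : Type} {star : S} (M : Model P S star W) (w : W)
    (Γ : Set (S × S)) (root : Multiset (Fml P S))
    (nest : List (S × Multiset (Fml P S))) : Prop :=
  satSharp M Γ →
    (∃ φ ∈ root, sat M w φ) ∨ ∃ e ∈ nest, ∀ v ∈ M.sig e.1, ∃ φ ∈ e.2, sat M v φ

/-- Validity of a nested sequent: its formula interpretation holds at every
precisification of every standpoint model. -/
def ValidSeq {P S : Type} (star : S) (Γ : Set (S × S))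
    (root : Multiset (Fml P S)) (nest : List (S × Multiset (Fml P S))) : Prop :=
  ∀ (W : Type) (M : Model P S star W) (w : W), satSeq M w Γ root nest

/-- Soundness of the `(◻ₛ)` rule: if the premise, obtained by appending the new
nesting `(s)[φ]` to a sequent some component of which contains `◻ₛφ`, is valid,
then the conclusion is valid. -/
theorem stmt2 {P S : Type} (star : S) (Γ : Set (S × S)) (s : S) (φ : Fml P S)
    (root : Multiset (Fml P S)) (nest : List (S × Multiset (Fml P S)))
    (hmem : Fml.box s φ ∈ root ∨ ∃ e ∈ nest, Fml.box s φ ∈ e.2)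
    (hprem : ValidSeq star Γ root (nest ++ [(s, ({φ} : Multiset (Fml P S)))])) :
    ValidSeq star Γ root nest := by
  intro W M w hΓ
  rcases hprem W M w hΓ with h | ⟨e, he, hv⟩
  · exact Or.inl h
  rcases List.mem_append.1 he with he | he
  · exact Or.inr ⟨e, he, hv⟩
  · -- e = (s, {φ})
    simp only [List.mem_singleton] at he
    subst he
    have hbox : sat M w (Fml.box s φ) := by
      intro v hvmem
      rcases hv v hvmem with ⟨ψ, hψ, hsat⟩
      simp only [Multiset.mem_singleton] at hψ
      subst hψ
      exact hsat
    rcases hmem with hr | ⟨e, he, hbe⟩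
    · exact Or.inl ⟨Fml.box s φ, hr, hbox⟩
    · refine Or.inr ⟨e, he, fun v hvmem => ⟨Fml.box s φ, hbe, ?_⟩⟩
      intro u hu
      exact hbox u hu
end

section
/- Soundness of the (◇ₛ¹) rule: let Γ ⊢ Δ{◇ₛφ}, (s')[Σ] be a nested sequent whose indicated component contains ◇ₛφ and whose consequent contains a nesting (s')[Σ], and suppose s' ≼*_Γ s. If the premise Γ ⊢ Δ{◇ₛφ}, (s')[Σ, φ] (obtained by adding φ to the nesting (s')[Σ]) is valid, then the conclusion Γ ⊢ Δ{◇ₛφ}, (s')[Σ] is valid. -/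
/-!
The nesting `◻_{s'}(φ ∨ ⋁Θ)` of the premise yields either the nesting `◻_{s'}(⋁Θ)` of the
conclusion or `◇_{s'}φ`. In the second case `σ(s') ⊆ σ(s)` (soundness of `≼*_Γ`) gives `◇ₛφ`,
which is true at every precisification and occurs in the conclusion.
-/

def satConsequent {P S W : Type} {star : S} (M : Model P S star W) (w : W)
    (root : Multiset (Fml P S)) (nest : List (S × Multiset (Fml P S))) : Prop :=
  (∃ φ ∈ root, sat M w φ) ∨ ∃ e ∈ nest, ∀ v ∈ M.sig e.1, ∃ φ ∈ e.2, sat M v φ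

theorem SpRel.sig_subset {P S W : Type} {star : S} {Γ : Set (S × S)} (M : Model P S star W)
    (hΓ : satSharp M Γ) {a b : S} (h : SpRel star Γ a b) : M.sig a ⊆ M.sig b := by
  induction h with
  | base hab => exact hΓ _ hab
  | toStar _ => simp [M.sig_star]
  | refl _ => exact subset_rfl
  | trans _ _ ihab ihbc => exact ihab.trans ihbc

section satConsequent

variable {P S W : Type} {star : S} (M : Model P S star W) (w : W) (root : Multiset (Fml P S))

theorem satConsequent.mono {nest nest' : List (S × Multiset (Fml P S))} (hsub : nest ⊆ nest')
    (h : satConsequent M w root nest) : satConsequent M w root nest' :=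
  h.imp_right fun ⟨e, he, hbox⟩ => ⟨e, hsub he, hbox⟩

/-- `◇ₛφ` has the same truth value at every precisification, so once it holds it makes
every component containing it true, nestings included. -/
theorem satConsequent_of_dia_mem {nest : List (S × Multiset (Fml P S))} {s : S} {φ : Fml P S}
    (hmem : Fml.dia s φ ∈ root ∨ ∃ e ∈ nest, Fml.dia s φ ∈ e.2)
    (hdia : ∃ v ∈ M.sig s, sat M v φ) : satConsequent M w root nest := by
  rcases hmem with hroot | ⟨e, he, hdia_mem⟩
  · exact Or.inl ⟨_, hroot, hdia⟩
  · exact Or.inr ⟨e, he, fun _ _ => ⟨_, hdia_mem, hdia⟩⟩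

end satConsequent

theorem box_cons_imp_box_or_dia {P S W : Type} {star : S} (M : Model P S star W) {t : S}
    {φ : Fml P S} {Θ : Multiset (Fml P S)} (h : ∀ v ∈ M.sig t, ∃ ψ ∈ φ ::ₘ Θ, sat M v ψ) :
    (∀ v ∈ M.sig t, ∃ ψ ∈ Θ, sat M v ψ) ∨ ∃ v ∈ M.sig t, sat M v φ := by
  refine or_iff_not_imp_right.mpr fun hnot v hv => ?_
  obtain ⟨ψ, hψ, hsat⟩ := h v hv
  rcases Multiset.mem_cons.mp hψ with rfl | hψΘ
  · exact absurd ⟨v, hv, hsat⟩ hnot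
  · exact ⟨ψ, hψΘ, hsat⟩

/-- Soundness of the `(◇ₛ¹)` rule: if `◇ₛφ` occurs in a component of
`Γ ⊢ Δ{◇ₛφ}, (s')[Θ]`, `s' ≼*_Γ s`, and the premise obtained by adding `φ`
to the nesting `(s')[Θ]` is valid, then the conclusion is valid. -/
theorem stmt3 {P S : Type} (star : S) (Γ : Set (S × S)) (s s' : S) (φ : Fml P S)
    (root Θ : Multiset (Fml P S)) (l₁ l₂ : List (S × Multiset (Fml P S)))
    (hmem : Fml.dia s φ ∈ root ∨ ∃ e ∈ l₁ ++ l₂, Fml.dia s φ ∈ e.2)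
    (hrel : SpRel star Γ s' s)
    (hprem : ValidSeq star Γ root (l₁ ++ (s', φ ::ₘ Θ) :: l₂)) :
    ValidSeq star Γ root (l₁ ++ (s', Θ) :: l₂) := by
  intro W M w hΓ
  have hrest : l₁ ++ l₂ ⊆ l₁ ++ (s', Θ) :: l₂ := fun _ he =>
    List.perm_middle.symm.subset (List.mem_cons_of_mem _ he)
  rcases hprem W M w hΓ with hroot | ⟨e, he, hbox⟩
  · exact Or.inl hroot
  rcases List.mem_cons.mp (List.perm_middle.mem_iff.mp he) with rfl | he
  · rcases box_cons_imp_box_or_dia M hbox with hΘ | ⟨v, hv, hφ⟩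
    · exact Or.inr ⟨_, List.perm_middle.symm.subset List.mem_cons_self, hΘ⟩
    · exact (satConsequent_of_dia_mem M w root hmem
        ⟨v, hrel.sig_subset M hΓ hv, hφ⟩).mono M w root hrest
  · exact Or.inr ⟨e, hrest he, hbox⟩
end

section
/- Soundness of the (nₛ) rule: let Γ ⊢ Δ be a nested sequent and s ∈ S. If the premise Γ ⊢ Δ, (s)[∅] (obtained by appending an empty nesting labeled s to the consequent) is valid, then the conclusion Γ ⊢ Δ is valid. -/
/-- Soundness of the `(nₛ)` rule: if the premise, obtained by appending an
empty nesting `(s)[∅]` to the consequent, is valid, then the conclusion is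
valid. -/
theorem stmt6 {P S : Type} (star : S) (Γ : Set (S × S)) (s : S)
    (root : Multiset (Fml P S)) (nest : List (S × Multiset (Fml P S)))
    (hprem : ValidSeq star Γ root (nest ++ [(s, (∅ : Multiset (Fml P S)))])) :
    ValidSeq star Γ root nest := by
  intro W M w hsh
  rcases hprem W M w hsh with h | ⟨e, he, hv⟩
  · exact Or.inl h
  · rcases List.mem_append.mp he with he | he
    · exact Or.inr ⟨e, he, hv⟩
    · simp at he
      obtain ⟨v, hv'⟩ := M.sig_nonempty e.1
      rcases hv v hv' with ⟨φ, hφ, _⟩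
      subst he; simp at hφ
end

section
/- Soundness of the (◇*) rule: let Γ ⊢ Δ{◇*φ} be a nested sequent whose indicated component contains ◇*φ. If the premise Γ ⊢ φ, Δ{◇*φ} (obtained by adding φ to the root component Σ₀) is valid, then the conclusion Γ ⊢ Δ{◇*φ} is valid. -/
/-- Soundness of the `(◇*)` rule: if `◇*φ` occurs in a component of the
conclusion and the premise, obtained by adding `φ` to the root component, is
valid, then the conclusion is valid. -/
theorem stmt7 {P S : Type} (star : S) (Γ : Set (S × S)) (φ : Fml P S)
    (root : Multiset (Fml P S)) (nest : List (S × Multiset (Fml P S)))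
    (hmem : Fml.dia star φ ∈ root ∨ ∃ e ∈ nest, Fml.dia star φ ∈ e.2)
    (hprem : ValidSeq star Γ (φ ::ₘ root) nest) :
    ValidSeq star Γ root nest := by
  intro W M w hsh
  rcases hprem W M w hsh with (⟨ψ, hψ, hsat⟩ | hnest)
  · rcases Multiset.mem_cons.mp hψ with heq | hψ
    · have hsat : sat M w φ := heq ▸ hsat
      -- ψ = φ: then ◇*φ holds everywhere
      have hdia : ∀ v : W, sat M v (Fml.dia star φ) := by
        intro v
        exact ⟨w, by simp [M.sig_star], hsat⟩
      rcases hmem with hr | ⟨e, he, hφe⟩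
      · exact Or.inl ⟨_, hr, hdia w⟩
      · exact Or.inr ⟨e, he, fun v _ => ⟨_, hφe, hdia v⟩⟩
    · exact Or.inl ⟨ψ, hψ, hsat⟩
  · exact Or.inr hnest
end

section
/- Completeness of NS(V): if a nested sequent Γ ⊢ Δ is valid (its formula interpretation ι(Γ ⊢ Δ) holds at every precisification of every standpoint model over V), then Γ ⊢ Δ is derivable in the nested sequent calculus NS(V). -/
/-- Derivability in the nested sequent calculus `NS(V)`, for sequents with
antecedent `Γ`, root component `root` and nestings `nest`.  The constructors
are the rules of `NS(V)` read bottom-up (premises above, conclusion below). -/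
inductive Deriv {P S : Type} (star : S) (Γ : Set (S × S)) :
    Multiset (Fml P S) → List (S × Multiset (Fml P S)) → Prop
  /-- `(id)`: some component contains both `p` and `¬p`. -/
  | id {root nest} (p : P) :
      ((Fml.atom p ∈ root ∧ Fml.natom p ∈ root) ∨
        ∃ e ∈ nest, Fml.atom p ∈ e.2 ∧ Fml.natom p ∈ e.2) →
      Deriv star Γ root nest
  /-- `(∨)`, principal formula in the root component. -/
  | orRoot {root nest} {φ ψ : Fml P S} : Fml.or φ ψ ∈ root →
      Deriv star Γ (φ ::ₘ ψ ::ₘ root) nest → Deriv star Γ root nest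
  /-- `(∨)`, principal formula in a nesting. -/
  | orNest {root l₁ l₂ s Θ} {φ ψ : Fml P S} : Fml.or φ ψ ∈ Θ →
      Deriv star Γ root (l₁ ++ (s, φ ::ₘ ψ ::ₘ Θ) :: l₂) →
      Deriv star Γ root (l₁ ++ (s, Θ) :: l₂)
  /-- `(∧)`, principal formula in the root component. -/
  | andRoot {root nest} {φ ψ : Fml P S} : Fml.and φ ψ ∈ root →
      Deriv star Γ (φ ::ₘ root) nest → Deriv star Γ (ψ ::ₘ root) nest →
      Deriv star Γ root nest
  /-- `(∧)`, principal formula in a nesting. -/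
  | andNest {root l₁ l₂ s Θ} {φ ψ : Fml P S} : Fml.and φ ψ ∈ Θ →
      Deriv star Γ root (l₁ ++ (s, φ ::ₘ Θ) :: l₂) →
      Deriv star Γ root (l₁ ++ (s, ψ ::ₘ Θ) :: l₂) →
      Deriv star Γ root (l₁ ++ (s, Θ) :: l₂)
  /-- `(◻ₛ)`: append a fresh nesting `(s)[φ]` for a principal `◻ₛφ`. -/
  | box {root nest s} {φ : Fml P S} :
      (Fml.box s φ ∈ root ∨ ∃ e ∈ nest, Fml.box s φ ∈ e.2) →
      Deriv star Γ root (nest ++ [(s, ({φ} : Multiset (Fml P S)))]) →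
      Deriv star Γ root nest
  /-- `(nₛ)`: append a fresh empty nesting `(s)[∅]`. -/
  | nrule {root nest} (s : S) :
      Deriv star Γ root (nest ++ [(s, (∅ : Multiset (Fml P S)))]) →
      Deriv star Γ root nest
  /-- `(◇ₛ¹)`: `◇ₛφ` principal in a component of `Δ`, `s' ≼*_Γ s`,
  and `φ` is added to the displayed nesting `(s')[Θ]`. -/
  | dia1 {root l₁ l₂ s s' Θ} {φ : Fml P S} : SpRel star Γ s' s →
      (Fml.dia s φ ∈ root ∨ ∃ e ∈ l₁ ++ l₂, Fml.dia s φ ∈ e.2) →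
      Deriv star Γ root (l₁ ++ (s', φ ::ₘ Θ) :: l₂) →
      Deriv star Γ root (l₁ ++ (s', Θ) :: l₂)
  /-- `(◇ₛ²)`: `◇ₛφ` principal inside the nesting `(s')[◇ₛφ, Θ]`, `s' ≼*_Γ s`. -/
  | dia2 {root l₁ l₂ s s' Θ} {φ : Fml P S} : SpRel star Γ s' s →
      Deriv star Γ root (l₁ ++ (s', Fml.dia s φ ::ₘ φ ::ₘ Θ) :: l₂) →
      Deriv star Γ root (l₁ ++ (s', Fml.dia s φ ::ₘ Θ) :: l₂)
  /-- `(◇*)`: `◇*φ` principal in some component, `φ` is added to the root. -/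
  | diaStar {root nest} {φ : Fml P S} :
      (Fml.dia star φ ∈ root ∨ ∃ e ∈ nest, Fml.dia star φ ∈ e.2) →
      Deriv star Γ (φ ::ₘ root) nest → Deriv star Γ root nest

/-!
Completeness is proved by proof search. Let `F` be the (finite) set of subformulas of the given
sequent. Whenever a sequent over `F` is not derivable and some rule would add something new to
it — a formula of `F` to a component, or a nesting meeting a demand of a `◻ₛ`-formula or of the
rule `(nₛ)` — one premise of that rule is again not derivable, and it is strictly smaller in a
measure counting what is still missing. So the search ends in a non-derivable *saturated*
sequent. Its components form a countermodel: `σ(s)` for `s ≠ *` consists of the nestings whose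
label is `≼*_Γ s`, an atom is false exactly where it occurs, and by saturation every formula is
false at its own component. Every premise extends its conclusion, so this model also refutes the
sequent we started from.
-/

namespace StandpointNS

open scoped Classical

variable {P S : Type} {star : S} {Γ : Set (S × S)} {F : Finset (Fml P S)}
  {root root' Θ Θ' : Multiset (Fml P S)} {nest nest' l₁ l₂ : List (S × Multiset (Fml P S))}
  {s : S} {φ ψ : Fml P S}

section Sequents

def components (root : Multiset (Fml P S)) (nest : List (S × Multiset (Fml P S))) :
    List (Multiset (Fml P S)) :=
  root :: nest.map Prod.snd

theorem mem_components :
    Θ ∈ components root nest ↔ Θ = root ∨ ∃ l₁ s l₂, nest = l₁ ++ (s, Θ) :: l₂ := by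
  simp only [components, List.mem_cons, List.mem_map]
  refine or_congr Iff.rfl ⟨?_, ?_⟩
  · rintro ⟨⟨s, Θ⟩, he, rfl⟩
    obtain ⟨l₁, l₂, rfl⟩ := List.append_of_mem he
    exact ⟨l₁, s, l₂, rfl⟩
  · rintro ⟨l₁, s, l₂, rfl⟩
    exact ⟨(s, Θ), by simp, rfl⟩

def Occurs (root : Multiset (Fml P S)) (nest : List (S × Multiset (Fml P S))) (φ : Fml P S) :
    Prop :=
  φ ∈ root ∨ ∃ e ∈ nest, φ ∈ e.2

theorem occurs_iff_exists_mem_components :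
    Occurs root nest φ ↔ ∃ Θ ∈ components root nest, φ ∈ Θ := by
  simp only [Occurs, components, List.mem_cons, List.mem_map]
  aesop

theorem Occurs.of_mem_components (hΘ : Θ ∈ components root nest) (hφ : φ ∈ Θ) :
    Occurs root nest φ :=
  occurs_iff_exists_mem_components.2 ⟨Θ, hΘ, hφ⟩

theorem Occurs.of_not_mem_mid (h : Occurs root (l₁ ++ (s, Θ) :: l₂) φ) (hφ : φ ∉ Θ) :
    Occurs root (l₁ ++ l₂) φ := by
  simp only [Occurs, List.mem_append, List.mem_cons] at h ⊢
  aesop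

def SubNest (n₁ n₂ : List (S × Multiset (Fml P S))) : Prop :=
  ∀ e ∈ n₁, ∃ e' ∈ n₂, e.1 = e'.1 ∧ e.2 ⊆ e'.2

theorem SubNest.refl (n : List (S × Multiset (Fml P S))) : SubNest n n :=
  fun e he => ⟨e, he, rfl, Multiset.Subset.refl _⟩

theorem subNest_append (n l : List (S × Multiset (Fml P S))) : SubNest n (n ++ l) :=
  fun e he => ⟨e, List.mem_append_left _ he, rfl, Multiset.Subset.refl _⟩

theorem subNest_mid (h : Θ ⊆ Θ') : SubNest (l₁ ++ (s, Θ) :: l₂) (l₁ ++ (s, Θ') :: l₂) := by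
  intro e he
  simp only [List.mem_append, List.mem_cons] at he
  rcases he with he | rfl | he
  · exact ⟨e, by simp [he], rfl, Multiset.Subset.refl _⟩
  · exact ⟨(s, Θ'), by simp, rfl, h⟩
  · exact ⟨e, by simp [he], rfl, Multiset.Subset.refl _⟩

def Refutable (star : S) (Γ : Set (S × S)) (root : Multiset (Fml P S))
    (nest : List (S × Multiset (Fml P S))) : Prop :=
  ∃ (W : Type) (M : Model P S star W) (w : W), ¬ satSeq M w Γ root nest

theorem satSeq_mono {W : Type} {M : Model P S star W} {w : W} (hroot : root ⊆ root')
    (hnest : SubNest nest nest') (h : satSeq M w Γ root nest) : satSeq M w Γ root' nest' := by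
  intro hΓ
  rcases h hΓ with ⟨φ, hφ, hsat⟩ | ⟨e, he, hall⟩
  · exact Or.inl ⟨φ, hroot hφ, hsat⟩
  · obtain ⟨e', he', hlabel, hsub⟩ := hnest e he
    refine Or.inr ⟨e', he', fun v hv => ?_⟩
    obtain ⟨φ, hφ, hsat⟩ := hall v (hlabel ▸ hv)
    exact ⟨φ, hsub hφ, hsat⟩

theorem Refutable.of_subset (h : Refutable star Γ root' nest') (hroot : root ⊆ root')
    (hnest : SubNest nest nest') : Refutable star Γ root nest :=
  let ⟨W, M, w, hw⟩ := h
  ⟨W, M, w, fun hs => hw (satSeq_mono hroot hnest hs)⟩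

end Sequents

section Subformulas

noncomputable def subformulas : Fml P S → Finset (Fml P S)
  | .atom p => {.atom p}
  | .natom p => {.natom p}
  | .or φ ψ => insert (.or φ ψ) (subformulas φ ∪ subformulas ψ)
  | .and φ ψ => insert (.and φ ψ) (subformulas φ ∪ subformulas ψ)
  | .box s φ => insert (.box s φ) (subformulas φ)
  | .dia s φ => insert (.dia s φ) (subformulas φ)

theorem mem_subformulas_self (φ : Fml P S) : φ ∈ subformulas φ := by
  cases φ <;> simp [subformulas]

theorem subformulas_subset (h : ψ ∈ subformulas φ) : subformulas ψ ⊆ subformulas φ := by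
  induction φ with
  | atom | natom => simp_all [subformulas]
  | or a b iha ihb | and a b iha ihb =>
    simp only [subformulas, Finset.mem_insert, Finset.mem_union] at h ⊢
    rcases h with rfl | h | h
    · rfl
    · exact (iha h).trans (Finset.subset_union_left.trans (Finset.subset_insert _ _))
    · exact (ihb h).trans (Finset.subset_union_right.trans (Finset.subset_insert _ _))
  | box s a ih | dia s a ih =>
    simp only [subformulas, Finset.mem_insert] at h ⊢
    rcases h with rfl | h
    · rfl
    · exact (ih h).trans (Finset.subset_insert _ _)

def SubformulaClosed (F : Finset (Fml P S)) : Prop :=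
  ∀ φ ∈ F, subformulas φ ⊆ F

theorem SubformulaClosed.or_mem (hF : SubformulaClosed F) (h : Fml.or φ ψ ∈ F) :
    φ ∈ F ∧ ψ ∈ F :=
  ⟨hF _ h (by simp [subformulas, mem_subformulas_self]),
    hF _ h (by simp [subformulas, mem_subformulas_self])⟩

theorem SubformulaClosed.and_mem (hF : SubformulaClosed F) (h : Fml.and φ ψ ∈ F) :
    φ ∈ F ∧ ψ ∈ F :=
  ⟨hF _ h (by simp [subformulas, mem_subformulas_self]),
    hF _ h (by simp [subformulas, mem_subformulas_self])⟩

theorem SubformulaClosed.box_mem (hF : SubformulaClosed F) (h : Fml.box s φ ∈ F) : φ ∈ F :=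
  hF _ h (by simp [subformulas, mem_subformulas_self])

theorem SubformulaClosed.dia_mem (hF : SubformulaClosed F) (h : Fml.dia s φ ∈ F) : φ ∈ F :=
  hF _ h (by simp [subformulas, mem_subformulas_self])

noncomputable def subformulaClosure (root : Multiset (Fml P S))
    (nest : List (S × Multiset (Fml P S))) : Finset (Fml P S) :=
  (components root nest).toFinset.biUnion fun Θ => Θ.toFinset.biUnion subformulas

theorem subformulaClosed_subformulaClosure (root : Multiset (Fml P S))
    (nest : List (S × Multiset (Fml P S))) : SubformulaClosed (subformulaClosure root nest) := by
  intro ψ hψ χ hχ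
  simp only [subformulaClosure, Finset.mem_biUnion] at hψ ⊢
  obtain ⟨Θ, hΘ, φ, hφ, hψφ⟩ := hψ
  exact ⟨Θ, hΘ, φ, hφ, subformulas_subset hψφ hχ⟩

theorem Occurs.mem_subformulaClosure (h : Occurs root nest φ) :
    φ ∈ subformulaClosure root nest := by
  obtain ⟨Θ, hΘ, hφ⟩ := occurs_iff_exists_mem_components.1 h
  simp only [subformulaClosure, Finset.mem_biUnion, List.mem_toFinset, Multiset.mem_toFinset]
  exact ⟨Θ, hΘ, φ, hφ, mem_subformulas_self φ⟩

end Subformulas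

section Measure

structure Grows (F : Finset (Fml P S)) (Θ Θ' : Multiset (Fml P S)) : Prop where
  subset : Θ ⊆ Θ'
  mem : ∀ φ ∈ Θ', φ ∈ Θ ∨ φ ∈ F
  not_subset : ¬ Θ' ⊆ Θ

theorem grows_cons (hφF : φ ∈ F) (hφ : φ ∉ Θ) : Grows F Θ (φ ::ₘ Θ) where
  subset := Multiset.subset_cons Θ φ
  mem _ hχ := (Multiset.mem_cons.1 hχ).elim (fun h => Or.inr (h ▸ hφF)) Or.inl
  not_subset h := hφ (h (Multiset.mem_cons_self φ Θ))

theorem grows_cons_cons (hφF : φ ∈ F) (hψF : ψ ∈ F) (h : ¬(φ ∈ Θ ∧ ψ ∈ Θ)) :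
    Grows F Θ (φ ::ₘ ψ ::ₘ Θ) where
  subset := Multiset.Subset.trans (Multiset.subset_cons Θ ψ) (Multiset.subset_cons _ φ)
  mem χ hχ := by
    rcases Multiset.mem_cons.1 hχ with rfl | hχ
    · exact Or.inr hφF
    · exact (Multiset.mem_cons.1 hχ).elim (fun h => Or.inr (h ▸ hψF)) Or.inl
  not_subset hsub := h ⟨hsub (by simp), hsub (by simp)⟩

noncomputable def gap (F : Finset (Fml P S)) (Θ : Multiset (Fml P S)) : ℕ :=
  (F.filter (· ∉ Θ)).card

theorem Grows.gap_lt (h : Grows F Θ Θ') : gap F Θ' < gap F Θ := by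
  obtain ⟨φ, hφ', hφ⟩ : ∃ φ ∈ Θ', φ ∉ Θ := by
    by_contra! hsub
    exact h.not_subset fun φ hφ => hsub φ hφ
  refine Finset.card_lt_card ((Finset.ssubset_iff_of_subset ?_).2 ⟨φ, ?_, ?_⟩)
  · intro χ
    simp only [Finset.mem_filter]
    exact fun ⟨hχF, hχ⟩ => ⟨hχF, fun hχΘ => hχ (h.subset hχΘ)⟩
  · exact Finset.mem_filter.2 ⟨(h.mem φ hφ').resolve_left hφ, hφ⟩
  · simp [hφ']

variable [Fintype S]

/-- The demand `(s, some φ)` asks for a nesting labelled `s` that contains `φ` (rule `(◻ₛ)`),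
the demand `(s, none)` just for a nesting labelled `s` (rule `(nₛ)`). -/
noncomputable def unmet (F : Finset (Fml P S)) (nest : List (S × Multiset (Fml P S))) :
    Finset (S × Option (Fml P S)) :=
  (Finset.univ ×ˢ F.insertNone).filter fun d => ¬ ∃ e ∈ nest, e.1 = d.1 ∧ ∀ φ ∈ d.2, φ ∈ e.2

/-- A new nesting may raise the sum of the gaps by up to `#F`; the weight `#F + 1` of an unmet
demand outweighs this. -/
noncomputable def measure (F : Finset (Fml P S)) (root : Multiset (Fml P S))
    (nest : List (S × Multiset (Fml P S))) : ℕ :=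
  (F.card + 1) * (unmet F nest).card + gap F root + (nest.map fun e => gap F e.2).sum

theorem unmet_subset (h : SubNest nest nest') : unmet F nest' ⊆ unmet F nest := by
  intro d hd
  simp only [unmet, Finset.mem_filter] at hd ⊢
  refine ⟨hd.1, fun ⟨e, he, hlabel, hmem⟩ => hd.2 ?_⟩
  obtain ⟨e', he', hlabel', hsub⟩ := h e he
  exact ⟨e', he', hlabel' ▸ hlabel, fun φ hφ => hsub (hmem φ hφ)⟩

theorem measure_lt_of_grows_root (h : Grows F root root') :
    measure F root' nest < measure F root nest := by
  have := h.gap_lt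
  simp only [measure]
  omega

theorem measure_lt_of_grows_mid (h : Grows F Θ Θ') :
    measure F root (l₁ ++ (s, Θ') :: l₂) < measure F root (l₁ ++ (s, Θ) :: l₂) := by
  have hgap := h.gap_lt
  have hunmet := Nat.mul_le_mul_left (F.card + 1)
    (Finset.card_le_card (unmet_subset (F := F) (subNest_mid (l₁ := l₁) (l₂ := l₂) (s := s)
      h.subset)))
  simp only [measure, List.map_append, List.map_cons, List.sum_append, List.sum_cons]
  omega

theorem measure_append_lt {d : S × Option (Fml P S)} (hd : d ∈ unmet F nest)
    (hd' : d ∉ unmet F (nest ++ [(s, Θ)])) :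
    measure F root (nest ++ [(s, Θ)]) < measure F root nest := by
  have hunmet : (unmet F (nest ++ [(s, Θ)])).card + 1 ≤ (unmet F nest).card :=
    Finset.card_lt_card ((Finset.ssubset_iff_of_subset (unmet_subset (subNest_append _ _))).2
      ⟨d, hd, hd'⟩)
  have := Nat.mul_le_mul_left (F.card + 1) hunmet
  have : gap F Θ ≤ F.card := Finset.card_filter_le _ _
  simp only [measure, List.map_append, List.map_cons, List.map_nil, List.sum_append,
    List.sum_cons, List.sum_nil]
  nlinarith

end Measure

section Countermodel

structure Saturated (star : S) (Γ : Set (S × S)) (root : Multiset (Fml P S))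
    (nest : List (S × Multiset (Fml P S))) : Prop where
  not_id : ∀ Θ ∈ components root nest, ∀ p, Fml.atom p ∈ Θ → Fml.natom p ∉ Θ
  or_mem : ∀ Θ ∈ components root nest, ∀ φ ψ, Fml.or φ ψ ∈ Θ → φ ∈ Θ ∧ ψ ∈ Θ
  and_mem : ∀ Θ ∈ components root nest, ∀ φ ψ, Fml.and φ ψ ∈ Θ → φ ∈ Θ ∨ ψ ∈ Θ
  box_mem : ∀ s φ, Occurs root nest (Fml.box s φ) → ∃ e ∈ nest, e.1 = s ∧ φ ∈ e.2
  label_mem : ∀ s, ∃ e ∈ nest, e.1 = s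
  dia_mem : ∀ s φ, Occurs root nest (Fml.dia s φ) →
    ∀ e ∈ nest, SpRel star Γ e.1 s → φ ∈ e.2
  diaStar_mem : ∀ φ, Occurs root nest (Fml.dia star φ) → φ ∈ root

def component (root : Multiset (Fml P S)) (nest : List (S × Multiset (Fml P S))) :
    Option (Fin nest.length) → Multiset (Fml P S)
  | none => root
  | some i => (nest.get i).2

theorem component_mem_components (w : Option (Fin nest.length)) :
    component root nest w ∈ components root nest := by
  cases w with
  | none => exact List.mem_cons_self
  | some i => exact List.mem_cons_of_mem _ (List.mem_map_of_mem (List.get_mem nest i))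

def counterModel (star : S) (Γ : Set (S × S)) (root : Multiset (Fml P S))
    (nest : List (S × Multiset (Fml P S))) (hlabel : ∀ s, ∃ e ∈ nest, e.1 = s) :
    Model P S star (Option (Fin nest.length)) where
  nonempty := ⟨none⟩
  sig s := {w | s = star ∨ ∃ i, w = some i ∧ SpRel star Γ (nest.get i).1 s}
  val p := {w | Fml.atom p ∉ component root nest w}
  sig_nonempty s := by
    obtain ⟨e, he, rfl⟩ := hlabel s
    obtain ⟨i, rfl⟩ := List.mem_iff_get.1 he
    exact ⟨some i, Or.inr ⟨i, rfl, SpRel.refl _⟩⟩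
  sig_star := Set.eq_univ_of_forall fun _ => Or.inl rfl

theorem satSharp_counterModel (hΓ : ∀ q ∈ Γ, q.1 ≠ star) (hlabel : ∀ s, ∃ e ∈ nest, e.1 = s) :
    satSharp (counterModel star Γ root nest hlabel) Γ := by
  rintro ⟨s, t⟩ hst w (hs | ⟨i, rfl, hi⟩)
  · exact absurd hs (hΓ _ hst)
  · exact Or.inr ⟨i, rfl, hi.trans (SpRel.base hst)⟩

theorem not_sat_counterModel (hsat : Saturated star Γ root nest) (φ : Fml P S)
    (w : Option (Fin nest.length)) (hφ : φ ∈ component root nest w) :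
    ¬ sat (counterModel star Γ root nest hsat.label_mem) w φ := by
  have hw : ∀ w, component root nest w ∈ components root nest := component_mem_components
  induction φ generalizing w with
  | atom p => exact fun h => h hφ
  | natom p => exact fun h => hsat.not_id _ (hw w) p (not_not.1 h) hφ
  | or a b iha ihb =>
    obtain ⟨ha, hb⟩ := hsat.or_mem _ (hw w) a b hφ
    exact fun h => h.elim (iha w ha) (ihb w hb)
  | and a b iha ihb =>
    exact fun h => (hsat.and_mem _ (hw w) a b hφ).elim (iha w · h.1) (ihb w · h.2)
  | box s a ih =>
    obtain ⟨e, he, rfl, ha⟩ := hsat.box_mem _ _ (.of_mem_components (hw w) hφ)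
    obtain ⟨i, rfl⟩ := List.mem_iff_get.1 he
    exact fun h => ih (some i) ha (h (some i) (Or.inr ⟨i, rfl, SpRel.refl _⟩))
  | dia s a ih =>
    have hocc := Occurs.of_mem_components (hw w) hφ
    rintro ⟨v, rfl | ⟨i, rfl, hi⟩, hv⟩
    · cases v with
      | none => exact ih none (hsat.diaStar_mem a hocc) hv
      | some i =>
        exact ih (some i) (hsat.dia_mem _ a hocc _ (List.get_mem nest i) (SpRel.toStar _)) hv
    · exact ih (some i) (hsat.dia_mem s a hocc _ (List.get_mem nest i) hi) hv

theorem Saturated.refutable (hΓ : ∀ q ∈ Γ, q.1 ≠ star) (hsat : Saturated star Γ root nest) :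
    Refutable star Γ root nest := by
  refine ⟨_, counterModel star Γ root nest hsat.label_mem, none, fun h => ?_⟩
  rcases h (satSharp_counterModel hΓ hsat.label_mem) with ⟨φ, hφ, hsatφ⟩ | ⟨e, he, hall⟩
  · exact not_sat_counterModel hsat φ none hφ hsatφ
  · obtain ⟨i, rfl⟩ := List.mem_iff_get.1 he
    obtain ⟨φ, hφ, hsatφ⟩ := hall (some i) (Or.inr ⟨i, rfl, SpRel.refl _⟩)
    exact not_sat_counterModel hsat φ (some i) hφ hsatφ

end Countermodel

section Expansion

def FormulasIn (F : Finset (Fml P S)) (root : Multiset (Fml P S))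
    (nest : List (S × Multiset (Fml P S))) : Prop :=
  ∀ φ, Occurs root nest φ → φ ∈ F

variable [Fintype S]

structure IsExpansion (star : S) (Γ : Set (S × S)) (F : Finset (Fml P S))
    (root : Multiset (Fml P S)) (nest : List (S × Multiset (Fml P S)))
    (root' : Multiset (Fml P S)) (nest' : List (S × Multiset (Fml P S))) : Prop where
  not_deriv : ¬ Deriv star Γ root' nest'
  root_subset : root ⊆ root'
  subNest : SubNest nest nest'
  measure_lt : measure F root' nest' < measure F root nest
  formulasIn : FormulasIn F root' nest'

def Expandable (star : S) (Γ : Set (S × S)) (F : Finset (Fml P S)) (root : Multiset (Fml P S))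
    (nest : List (S × Multiset (Fml P S))) : Prop :=
  ∃ root' nest', IsExpansion star Γ F root nest root' nest'

theorem expandable_of_grows_root (hin : FormulasIn F root nest) (hgrow : Grows F root root')
    (hnd : ¬ Deriv star Γ root' nest) : Expandable star Γ F root nest := by
  refine ⟨root', nest, hnd, hgrow.subset, SubNest.refl nest, measure_lt_of_grows_root hgrow, ?_⟩
  rintro χ (hχ | hχ)
  · exact (hgrow.mem χ hχ).elim (fun h => hin χ (Or.inl h)) id
  · exact hin χ (Or.inr hχ)

theorem expandable_of_grows_mid (hin : FormulasIn F root (l₁ ++ (s, Θ) :: l₂))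
    (hgrow : Grows F Θ Θ') (hnd : ¬ Deriv star Γ root (l₁ ++ (s, Θ') :: l₂)) :
    Expandable star Γ F root (l₁ ++ (s, Θ) :: l₂) := by
  refine ⟨root, _, hnd, Multiset.Subset.refl _, subNest_mid hgrow.subset,
    measure_lt_of_grows_mid hgrow, ?_⟩
  rintro χ (hχ | ⟨e, he, hχ⟩)
  · exact hin χ (Or.inl hχ)
  simp only [List.mem_append, List.mem_cons] at he
  rcases he with he | rfl | he
  · exact hin χ (Or.inr ⟨e, by simp [he], hχ⟩)
  · exact (hgrow.mem χ hχ).elim (fun h => hin χ (Or.inr ⟨(s, Θ), by simp, h⟩)) id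
  · exact hin χ (Or.inr ⟨e, by simp [he], hχ⟩)

theorem expandable_of_append {d : S × Option (Fml P S)} (hin : FormulasIn F root nest)
    (hΘ : ∀ φ ∈ Θ, φ ∈ F) (hd : d ∈ unmet F nest) (hd' : d ∉ unmet F (nest ++ [(s, Θ)]))
    (hnd : ¬ Deriv star Γ root (nest ++ [(s, Θ)])) : Expandable star Γ F root nest := by
  refine ⟨root, _, hnd, Multiset.Subset.refl _, subNest_append _ _, measure_append_lt hd hd', ?_⟩
  rintro χ (hχ | ⟨e, he, hχ⟩)
  · exact hin χ (Or.inl hχ)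
  rcases List.mem_append.1 he with he | he
  · exact hin χ (Or.inr ⟨e, he, hχ⟩)
  · obtain rfl := List.mem_singleton.1 he
    exact hΘ χ hχ

section Rules

variable (hF : SubformulaClosed F) (hin : FormulasIn F root nest)
  (hnd : ¬ Deriv star Γ root nest)
include hF hin hnd

theorem Expandable.of_or (hΘ : Θ ∈ components root nest) (hor : Fml.or φ ψ ∈ Θ)
    (hnot : ¬(φ ∈ Θ ∧ ψ ∈ Θ)) : Expandable star Γ F root nest := by
  obtain ⟨hφF, hψF⟩ := hF.or_mem (hin _ (.of_mem_components hΘ hor))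
  have hgrow := grows_cons_cons hφF hψF hnot
  rcases mem_components.1 hΘ with rfl | ⟨l₁, s, l₂, rfl⟩
  · exact expandable_of_grows_root hin hgrow fun d => hnd (Deriv.orRoot hor d)
  · exact expandable_of_grows_mid hin hgrow fun d => hnd (Deriv.orNest hor d)

theorem Expandable.of_and (hΘ : Θ ∈ components root nest) (hand : Fml.and φ ψ ∈ Θ)
    (hφ : φ ∉ Θ) (hψ : ψ ∉ Θ) : Expandable star Γ F root nest := by
  obtain ⟨hφF, hψF⟩ := hF.and_mem (hin _ (.of_mem_components hΘ hand))
  rcases mem_components.1 hΘ with rfl | ⟨l₁, s, l₂, rfl⟩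
  · by_cases hd : Deriv star Γ (φ ::ₘ Θ) nest
    · exact expandable_of_grows_root hin (grows_cons hψF hψ) fun d =>
        hnd (Deriv.andRoot hand hd d)
    · exact expandable_of_grows_root hin (grows_cons hφF hφ) hd
  · by_cases hd : Deriv star Γ root (l₁ ++ (s, φ ::ₘ Θ) :: l₂)
    · exact expandable_of_grows_mid hin (grows_cons hψF hψ) fun d =>
        hnd (Deriv.andNest hand hd d)
    · exact expandable_of_grows_mid hin (grows_cons hφF hφ) hd

theorem Expandable.of_box (hocc : Occurs root nest (Fml.box s φ))
    (hmiss : ¬ ∃ e ∈ nest, e.1 = s ∧ φ ∈ e.2) : Expandable star Γ F root nest := by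
  have hφF := hF.box_mem (hin _ hocc)
  refine expandable_of_append (d := (s, some φ)) hin (by simpa using hφF) ?_ ?_
    fun d => hnd (Deriv.box hocc d)
  · simpa [unmet, hφF] using hmiss
  · simp [unmet]

theorem Expandable.of_dia {e : S × Multiset (Fml P S)} (hocc : Occurs root nest (Fml.dia s φ))
    (he : e ∈ nest) (hrel : SpRel star Γ e.1 s) (hφ : φ ∉ e.2) :
    Expandable star Γ F root nest := by
  have hgrow := grows_cons (hF.dia_mem (hin _ hocc)) hφ
  obtain ⟨s', Θ⟩ := e
  obtain ⟨l₁, l₂, rfl⟩ := List.append_of_mem he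
  by_cases hdia : Fml.dia s φ ∈ Θ
  · obtain ⟨Θ₀, rfl⟩ := Multiset.exists_cons_of_mem hdia
    refine expandable_of_grows_mid hin hgrow fun d => hnd (Deriv.dia2 hrel ?_)
    rwa [Multiset.cons_swap] at d
  · exact expandable_of_grows_mid hin hgrow fun d =>
      hnd (Deriv.dia1 hrel (hocc.of_not_mem_mid hdia) d)

theorem Expandable.of_diaStar (hocc : Occurs root nest (Fml.dia star φ)) (hφ : φ ∉ root) :
    Expandable star Γ F root nest :=
  expandable_of_grows_root hin (grows_cons (hF.dia_mem (hin _ hocc)) hφ) fun d =>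
    hnd (Deriv.diaStar hocc d)

end Rules

theorem Expandable.of_label (hin : FormulasIn F root nest) (hnd : ¬ Deriv star Γ root nest)
    (hmiss : ¬ ∃ e ∈ nest, e.1 = s) : Expandable star Γ F root nest := by
  refine expandable_of_append (d := (s, none)) hin (by simp) ?_ ?_ fun d => hnd (Deriv.nrule s d)
  · simpa [unmet] using hmiss
  · simp [unmet]

theorem saturated_of_not_expandable (hF : SubformulaClosed F) (hin : FormulasIn F root nest)
    (hnd : ¬ Deriv star Γ root nest) (h : ¬ Expandable star Γ F root nest) :
    Saturated star Γ root nest where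
  not_id Θ hΘ p hp hnp := by
    refine hnd (Deriv.id p ?_)
    rcases mem_components.1 hΘ with rfl | ⟨l₁, s, l₂, rfl⟩
    · exact Or.inl ⟨hp, hnp⟩
    · exact Or.inr ⟨(s, Θ), by simp, hp, hnp⟩
  or_mem Θ hΘ φ ψ hor := by_contra fun hnot => h (.of_or hF hin hnd hΘ hor hnot)
  and_mem Θ hΘ φ ψ hand := by_contra fun hc =>
    h (.of_and hF hin hnd hΘ hand (not_or.1 hc).1 (not_or.1 hc).2)
  box_mem s φ hocc := by_contra fun hmiss => h (.of_box hF hin hnd hocc hmiss)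
  label_mem s := by_contra fun hmiss => h (.of_label hin hnd hmiss)
  dia_mem s φ hocc e he hrel := by_contra fun hφ => h (.of_dia hF hin hnd hocc he hrel hφ)
  diaStar_mem φ hocc := by_contra fun hφ => h (.of_diaStar hF hin hnd hocc hφ)

theorem refutable_of_not_deriv (hΓ : ∀ q ∈ Γ, q.1 ≠ star) (hF : SubformulaClosed F)
    (hin : FormulasIn F root nest) (hnd : ¬ Deriv star Γ root nest) :
    Refutable star Γ root nest := by
  induction hμ : measure F root nest using Nat.strong_induction_on generalizing root nest with
  | _ n ih =>
  by_cases hexp : Expandable star Γ F root nest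
  · obtain ⟨root', nest', hexp⟩ := hexp
    exact (ih _ (hμ ▸ hexp.measure_lt) hexp.formulasIn hexp.not_deriv rfl).of_subset
      hexp.root_subset hexp.subNest
  · exact (saturated_of_not_expandable hF hin hnd hexp).refutable hΓ

end Expansion

end StandpointNS

/-- Completeness of `NS(V)` (with `S` finite): every valid nested sequent,
whose antecedent is a set of sharpening statements over `S ∖ {*}`,
is derivable. -/
theorem stmt9 {P S : Type} [Finite S] (star : S) (Γ : Set (S × S))
    (hΓ : ∀ q ∈ Γ, q.1 ≠ star ∧ q.2 ≠ star)
    (root : Multiset (Fml P S)) (nest : List (S × Multiset (Fml P S)))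
    (h : ValidSeq star Γ root nest) :
    Deriv star Γ root nest := by
  have := Fintype.ofFinite S
  by_contra hnd
  obtain ⟨W, M, w, hw⟩ := StandpointNS.refutable_of_not_deriv (fun q hq => (hΓ q hq).1)
    (StandpointNS.subformulaClosed_subformulaClosure root nest)
    (fun _ => StandpointNS.Occurs.mem_subformulaClosure) hnd
  exact hw (h W M w)
end

section
/- Let Γ ⊢ Σ₀, (s₁)[Σ₁], …, (sₙ)[Σₙ] be a saturated colored nested sequent, and let M = (Π, σ, δ) be the extracted model with Π = {π₀, …, πₙ}, σ(*) = Π, σ(s) for s ≠ * the least set containing πᵢ for each 1 ≤ i ≤ n with sᵢ = s and closed under πⱼ ∈ σ(s') and s' ≼*_Γ s implying πⱼ ∈ σ(s), and δ(p) = {πᵢ : p° ∉ Σᵢ}. Then for every 0 ≤ i ≤ n and every colored formula ψ° ∈ Σᵢ whose top label is active, M, πᵢ ⊭ ψ (where ψ is the underlying uncolored formula). -/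
/-- Colored formulas: each subformula occurrence carries a label,
`true` for active (∘) and `false` for inactive (•). -/
inductive CFml (P S : Type) : Type
  | atom  : Bool → P → CFml P S
  | natom : Bool → P → CFml P S
  | or    : Bool → CFml P S → CFml P S → CFml P S
  | and   : Bool → CFml P S → CFml P S → CFml P S
  | box   : Bool → S → CFml P S → CFml P S
  | dia   : Bool → S → CFml P S → CFml P S

/-- The underlying uncolored formula of a colored formula. -/
def CFml.toFml {P S : Type} : CFml P S → Fml P S
  | .atom _ p   => .atom p
  | .natom _ p  => .natom p
  | .or _ φ ψ   => .or φ.toFml ψ.toFml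
  | .and _ φ ψ  => .and φ.toFml ψ.toFml
  | .box _ s φ  => .box s φ.toFml
  | .dia _ s φ  => .dia s φ.toFml

/-- The top label of a colored formula. -/
def CFml.label {P S : Type} : CFml P S → Bool
  | .atom b _  => b
  | .natom b _ => b
  | .or b _ _  => b
  | .and b _ _ => b
  | .box b _ _ => b
  | .dia b _ _ => b

/-- `ψ°`: the colored formula `ψ` with its top label set to active. -/
def CFml.act {P S : Type} : CFml P S → CFml P S
  | .atom _ p   => .atom true p
  | .natom _ p  => .natom true p
  | .or _ φ ψ   => .or true φ ψ
  | .and _ φ ψ  => .and true φ ψ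
  | .box _ s φ  => .box true s φ
  | .dia _ s φ  => .dia true s φ

/-- The `i`-th component of the colored nested sequent with root component
`root = Σ₀` and nestings `nest = [(s₁, Σ₁), …, (sₙ, Σₙ)]`
(`comp root nest 0 = Σ₀` and `comp root nest (j+1) = Σ_{j+1}`). -/
def comp {P S : Type} (root : Multiset (CFml P S))
    (nest : List (S × Multiset (CFml P S))) : ℕ → Multiset (CFml P S)
  | 0 => root
  | i + 1 => ((nest[i]?).map Prod.snd).getD ∅

/-- Saturation conditions for a colored nested sequent
`Γ ⊢ Σ₀, (s₁)[Σ₁], …, (sₙ)[Σₙ]`. -/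
structure Saturated {P S : Type} (star : S) (Γ : Set (S × S))
    (root : Multiset (CFml P S)) (nest : List (S × Multiset (CFml P S))) :
    Prop where
  /-- `(id)`: no component contains both `p°` and `¬p°`. -/
  idSat : ∀ i ≤ nest.length, ∀ p : P,
    CFml.atom true p ∈ comp root nest i → CFml.natom true p ∉ comp root nest i
  /-- `(∨)`: if `(φ ∨ ψ)° ∈ Σᵢ` then `φ° ∈ Σᵢ` and `ψ° ∈ Σᵢ`. -/
  orSat : ∀ i ≤ nest.length, ∀ φ ψ : CFml P S,
    CFml.or true φ ψ ∈ comp root nest i →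
      φ.act ∈ comp root nest i ∧ ψ.act ∈ comp root nest i
  /-- `(∧)`: if `(φ ∧ ψ)° ∈ Σᵢ` then `φ° ∈ Σᵢ` or `ψ° ∈ Σᵢ`. -/
  andSat : ∀ i ≤ nest.length, ∀ φ ψ : CFml P S,
    CFml.and true φ ψ ∈ comp root nest i →
      φ.act ∈ comp root nest i ∨ ψ.act ∈ comp root nest i
  /-- `(◇ₛ)`: if `(◇ₛφ)° ∈ Σᵢ` and `s' ≼*_Γ s` then `φ° ∈ Σⱼ` for every
  nesting `j` labeled `s'`. -/
  diaSat : ∀ i ≤ nest.length, ∀ (s : S) (φ : CFml P S),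
    CFml.dia true s φ ∈ comp root nest i →
      ∀ s', SpRel star Γ s' s →
        ∀ (j : ℕ) (e : S × Multiset (CFml P S)),
          nest[j]? = some e → e.1 = s' → φ.act ∈ e.2
  /-- `(◇*)`: if `(◇*φ)° ∈ Σᵢ` then `φ° ∈ Σ₀`. -/
  diaStarSat : ∀ i ≤ nest.length, ∀ φ : CFml P S,
    CFml.dia true star φ ∈ comp root nest i → φ.act ∈ root
  /-- `(◻ₛ)`: if `(◻ₛφ)° ∈ Σᵢ` then some nesting labeled `s` contains `φ°`. -/
  boxSat : ∀ i ≤ nest.length, ∀ (s : S) (φ : CFml P S),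
    CFml.box true s φ ∈ comp root nest i →
      ∃ (j : ℕ) (e : S × Multiset (CFml P S)),
        nest[j]? = some e ∧ e.1 = s ∧ φ.act ∈ e.2
  /-- `(nₛ)`: every standpoint labels some nesting. -/
  nSat : ∀ s : S, ∃ (j : ℕ) (e : S × Multiset (CFml P S)),
    nest[j]? = some e ∧ e.1 = s

/-- The auxiliary inductively defined part of the extracted interpretation of
standpoints: the least family containing `π_{j+1}` in `σ(s)` whenever the
`j`-th nesting is labeled `s`, and closed under `πⱼ ∈ σ(s')` and `s' ≼*_Γ s`
implying `πⱼ ∈ σ(s)`. -/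
inductive ExtSig {P S : Type} (star : S) (Γ : Set (S × S))
    (nest : List (S × Multiset (CFml P S))) : S → Fin (nest.length + 1) → Prop
  | base {j : ℕ} {e : S × Multiset (CFml P S)}
      (h : nest[j]? = some e) (hj : j + 1 < nest.length + 1) :
      ExtSig star Γ nest e.1 ⟨j + 1, hj⟩
  | up {s s' : S} {w : Fin (nest.length + 1)} :
      ExtSig star Γ nest s' w → SpRel star Γ s' s → ExtSig star Γ nest s w

/-- The extracted interpretation of standpoints: `σ(*) = Π`, and for
`s ≠ *`, `σ(s)` is the least set described by `ExtSig`. -/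
def extSig {P S : Type} (star : S) (Γ : Set (S × S))
    (nest : List (S × Multiset (CFml P S))) (s : S) :
    Set (Fin (nest.length + 1)) :=
  {w | s = star ∨ ExtSig star Γ nest s w}

/-- The extracted valuation: `δ(p) = {πᵢ : p° ∉ Σᵢ}`. -/
def extVal {P S : Type} (root : Multiset (CFml P S))
    (nest : List (S × Multiset (CFml P S))) (p : P) :
    Set (Fin (nest.length + 1)) :=
  {w | CFml.atom true p ∉ comp root nest w.val}

/-! The proof is an induction on `ψ` that reads each clause of `sat` against the
matching saturation condition. The only non-local cases are the modalities:
for `◻ₛφ` the nesting supplied by `(◻ₛ)` lies in `σ(s)`, and for `◇ₛφ` a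
precisification of `σ(s)` is either the root (if `s = *`, handled by `(◇*)`) or
a nesting labeled `s'` with `s' ≼*_Γ s`, which `(◇ₛ)` fills with `φ°`. -/

theorem CFml.act_eq_self {P S : Type} {ψ : CFml P S} (h : ψ.label = true) : ψ.act = ψ := by
  cases ψ <;> simp_all [CFml.label, CFml.act]

theorem comp_succ_of_getElem? {P S : Type} {root : Multiset (CFml P S)}
    {nest : List (S × Multiset (CFml P S))} {j : ℕ} {e : S × Multiset (CFml P S)}
    (h : nest[j]? = some e) : comp root nest (j + 1) = e.2 := by
  simp [comp, h]

theorem ExtSig.exists_getElem? {P S : Type} {star : S} {Γ : Set (S × S)}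
    {nest : List (S × Multiset (CFml P S))} {s : S} {w : Fin (nest.length + 1)}
    (h : ExtSig star Γ nest s w) :
    ∃ (j : ℕ) (e : S × Multiset (CFml P S)),
      nest[j]? = some e ∧ w.val = j + 1 ∧ SpRel star Γ e.1 s := by
  induction h with
  | base h _ => exact ⟨_, _, h, rfl, .refl _⟩
  | up _ hs ih =>
    obtain ⟨j, e, he, hw, hrel⟩ := ih
    exact ⟨j, e, he, hw, hrel.trans hs⟩

namespace Saturated

variable {P S : Type} {star : S} {Γ : Set (S × S)} {root : Multiset (CFml P S)}
  {nest : List (S × Multiset (CFml P S))}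

theorem exists_extSig_of_box (hsat : Saturated star Γ root nest) {i : Fin (nest.length + 1)}
    {s : S} {φ : CFml P S} (h : CFml.box true s φ ∈ comp root nest i) :
    ∃ v ∈ extSig star Γ nest s, φ.act ∈ comp root nest v := by
  obtain ⟨j, e, he, rfl, hφ⟩ := hsat.boxSat i i.is_le s φ h
  have hj : j < nest.length := (List.getElem?_eq_some_iff.mp he).1
  exact ⟨⟨j + 1, by omega⟩, .inr (.base he _), (comp_succ_of_getElem? he).symm ▸ hφ⟩

theorem act_mem_of_dia (hsat : Saturated star Γ root nest) {i : Fin (nest.length + 1)}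
    {s : S} {φ : CFml P S} (h : CFml.dia true s φ ∈ comp root nest i)
    {v : Fin (nest.length + 1)} (hv : v ∈ extSig star Γ nest s) :
    φ.act ∈ comp root nest v := by
  rcases hv with rfl | hv
  · obtain ⟨_ | j, hj⟩ := v
    · exact hsat.diaStarSat i i.is_le φ h
    · have he : nest[j]? = some nest[j] := List.getElem?_eq_getElem (by omega)
      rw [comp_succ_of_getElem? he]
      exact hsat.diaSat i i.is_le s φ h _ (.toStar _) j _ he rfl
  · obtain ⟨j, e, he, hvj, hrel⟩ := hv.exists_getElem?
    rw [hvj, comp_succ_of_getElem? he]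
    exact hsat.diaSat i i.is_le s φ h e.1 hrel j e he rfl

theorem not_sat_of_act_mem (hsat : Saturated star Γ root nest)
    (M : Model P S star (Fin (nest.length + 1)))
    (hσ : M.sig = extSig star Γ nest) (hδ : M.val = extVal root nest)
    (ψ : CFml P S) (i : Fin (nest.length + 1)) (h : ψ.act ∈ comp root nest i) :
    ¬ sat M i ψ.toFml := by
  induction ψ generalizing i with
  | atom _ p =>
    simpa [CFml.act, CFml.toFml, sat, hδ, extVal] using h
  | natom _ p =>
    simpa [CFml.toFml, sat, hδ, extVal] using fun ha => hsat.idSat i i.is_le p ha h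
  | or _ φ ψ ihφ ihψ =>
    obtain ⟨hφ, hψ⟩ := hsat.orSat i i.is_le φ ψ h
    rintro (hs | hs)
    exacts [ihφ i hφ hs, ihψ i hψ hs]
  | and _ φ ψ ihφ ihψ =>
    rintro ⟨hsφ, hsψ⟩
    rcases hsat.andSat i i.is_le φ ψ h with hφ | hψ
    exacts [ihφ i hφ hsφ, ihψ i hψ hsψ]
  | box _ s φ ihφ =>
    obtain ⟨v, hv, hφ⟩ := hsat.exists_extSig_of_box h
    exact fun hs => ihφ v hφ (hs v (hσ ▸ hv))
  | dia _ s φ ihφ =>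
    rintro ⟨v, hv, hs⟩
    exact ihφ v (hsat.act_mem_of_dia h (hσ ▸ hv)) hs

end Saturated

theorem stmt11_general {P S : Type} (star : S) (Γ : Set (S × S))
    (root : Multiset (CFml P S)) (nest : List (S × Multiset (CFml P S)))
    (hsat : Saturated star Γ root nest)
    (M : Model P S star (Fin (nest.length + 1)))
    (hσ : M.sig = extSig star Γ nest)
    (hδ : M.val = extVal root nest) :
    ∀ i : Fin (nest.length + 1), ∀ ψ ∈ comp root nest i.val,
      CFml.label ψ = true → ¬ sat M i (CFml.toFml ψ) := by
  intro i ψ hψ hl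
  exact hsat.not_sat_of_act_mem M hσ hδ ψ i (by rwa [CFml.act_eq_self hl])

/-- In the model extracted from a saturated colored nested sequent, every
active formula `ψ°` of a component `Σᵢ` is falsified at the corresponding
precisification `πᵢ`. -/
theorem stmt11 {P S : Type} [Finite S] (star : S) (Γ : Set (S × S))
    (root : Multiset (CFml P S)) (nest : List (S × Multiset (CFml P S)))
    (hsat : Saturated star Γ root nest)
    (M : Model P S star (Fin (nest.length + 1)))
    (hσ : M.sig = extSig star Γ nest)
    (hδ : M.val = extVal root nest) :
    ∀ i : Fin (nest.length + 1), ∀ ψ ∈ comp root nest i.val,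
      CFml.label ψ = true → ¬ sat M i (CFml.toFml ψ) :=
  stmt11_general star Γ root nest hsat M hσ hδ
end
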